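/- arXiv:1710.08982 — 2 statements merged into one kernel-verified Lean document; each statement's English description precedes it below -/
import Mathlib

section
/- Let G be a loopless multigraph on a finite vertex set V, let t ≥ 0 be an integer, and let H be the t-core of G. If μ_H(u,v) ≤ t+1 for all u,v ∈ V, and the simple graph B on V in which u and v are adjacent exactly when μ_H(u,v) = t+1 admits a full B-queue, then χ'(G) ≤ Δ(G) + t. -/
/-!
Let `k = Δ(G) + t` and take a minimal submultigraph `m` of `G` that is not `k`-edge-colourable.
For an edge `xy₀` of `m`, colour `m - xy₀` and grow Vizing's fan `F` at `x`: shifting colours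
along the fan and swapping `α`/`β` Kempe chains show that the colours missing at the vertices of
`F` are distinct colours of edges `xz`, `z ∈ F`, whence `k|F| + 2 ≤ ∑_{z ∈ F} (d_m(z) + m(xz))`.
So some `z ∈ F` has `d_m(z) + m(xz) > Δ + t`, which forces `z` into the core with `m(xz) > t`;
if `x` is itself a core vertex then `μ_H ≤ t + 1` forces two such `z`, each a `B`-neighbour of
`x` with `d_m(z) = Δ`. Hence the set `T` of core vertices with `d_m = Δ` is nonempty, and every
vertex in or next to `T` has two `B`-neighbours in `T`. Along a full `B`-queue, the first step
that reaches `T` would then add two new vertices besides `u_i`, which is not allowed.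
-/

structure Multigraph (V : Type*) where
  mu : V → V → ℕ
  symm : ∀ u v, mu u v = mu v u
  loopless : ∀ v, mu v v = 0

namespace Multigraph

variable {V : Type*} [Fintype V]

/-- The degree of a vertex: number of incident edges. -/
def deg (G : Multigraph V) (v : V) : ℕ := ∑ u, G.mu v u

/-- The maximum degree Δ(G). -/
def maxDeg (G : Multigraph V) : ℕ := Finset.univ.sup (deg G)

/-- The local multiplicity μ_G(v). -/
def locMult (G : Multigraph V) (v : V) : ℕ := Finset.univ.sup (G.mu v)

end Multigraph

namespace Multigraph

variable {V : Type*} [Fintype V]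

/-- A proper k-edge-colouring: a decomposition of μ_G into k symmetric {0,1}-valued
matchings. -/
def IsEdgeColoring (G : Multigraph V) (k : ℕ) (M : Fin k → V → V → ℕ) : Prop :=
  (∀ i u v, M i u v = M i v u) ∧
  (∀ i u v, M i u v ≤ 1) ∧
  (∀ i v, ∑ u, M i v u ≤ 1) ∧
  (∀ u v, ∑ i, M i u v = G.mu u v)

/-- The chromatic index χ'(G): least k admitting a proper k-edge-colouring. -/
noncomputable def chromaticIndex (G : Multigraph V) : ℕ :=
  sInf { k | ∃ M, IsEdgeColoring G k M }

end Multigraph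

namespace Multigraph

variable {V : Type*} [Fintype V]

/-- The t-core of G : induced submultigraph on the vertices v with
d_G(v) + μ_G(v) > Δ(G) + t. -/
def tCore (G : Multigraph V) (t : ℕ) : Multigraph V where
  mu u v := if (maxDeg G + t < deg G u + locMult G u) ∧
               (maxDeg G + t < deg G v + locMult G v) then G.mu u v else 0
  symm u v := by
    try dsimp only
    by_cases h : (maxDeg G + t < deg G u + locMult G u) ∧
        (maxDeg G + t < deg G v + locMult G v)
    · rw [if_pos h, if_pos ⟨h.2, h.1⟩, G.symm]
    · rw [if_neg h, if_neg fun h' => h ⟨h'.2, h'.1⟩]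
  loopless v := by
    try dsimp only
    split <;> simp [G.loopless]

end Multigraph

/-- A full B-queue for a finite simple graph B: distinct vertices u_1, …, u_q and
sets S_0 = ∅, S_1, …, S_q = V(B) with S_i = N(u_i) ∪ {u_i} ∪ S_{i−1},
1 ≤ |S_i \ S_{i−1}| ≤ 2 and |S_i \ (S_{i−1} ∪ {u_i})| ≤ 1 for each i. -/
def HasFullBQueue {V : Type*} [Fintype V] (B : SimpleGraph V) : Prop :=
  ∃ (q : ℕ) (u : ℕ → V) (S : ℕ → Set V),
    (∀ i j, i < q → j < q → u i = u j → i = j) ∧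
    S 0 = ∅ ∧
    (∀ i < q, S (i + 1) = B.neighborSet (u i) ∪ {u i} ∪ S i) ∧
    (∀ i < q, 1 ≤ (S (i + 1) \ S i).ncard ∧ (S (i + 1) \ S i).ncard ≤ 2) ∧
    (∀ i < q, (S (i + 1) \ (S i ∪ {u i})).ncard ≤ 1) ∧
    S q = Set.univ


open Finset Function

lemma Relation.ReflTransGen.exists_injOn_path {α : Type*} {R : α → α → Prop} {a b : α}
    (h : Relation.ReflTransGen R a b) :
    ∃ (y : ℕ → α) (r : ℕ), y 0 = a ∧ y r = b ∧ (∀ i < r, R (y i) (y (i + 1))) ∧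
      Set.InjOn y (Set.Iic r) := by
  induction h with
  | refl => exact ⟨fun _ => a, 0, rfl, rfl, by simp, fun i hi j hj _ => by simp_all⟩
  | @tail b c _ hbc ih =>
    obtain ⟨y, r, h0, hr, hstep, hinj⟩ := ih
    by_cases hc : ∃ j ≤ r, y j = c
    · obtain ⟨j, hj, rfl⟩ := hc
      exact ⟨y, j, h0, rfl, fun i hi => hstep i (by omega),
        hinj.mono (Set.Iic_subset_Iic.2 hj)⟩
    push Not at hc
    refine ⟨fun i => if i ≤ r then y i else c, r + 1, by simpa using h0, by simp, ?_, ?_⟩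
    · intro i hi
      rcases Nat.lt_succ_iff_lt_or_eq.1 hi with hi | rfl
      · simpa [hi.le, Nat.succ_le_of_lt hi] using hstep i hi
      · simpa [hr] using hbc
    · intro i hi j hj hij
      simp only [Set.mem_Iic] at hi hj
      by_cases hir : i ≤ r <;> by_cases hjr : j ≤ r <;>
        simp only [hir, hjr, if_true, if_false] at hij
      · exact hinj hir hjr hij
      · exact absurd hij (hc i hir)
      · exact absurd hij.symm (hc j hjr)
      · omega

lemma Finset.map_swap_eq_self {ι : Type*} [DecidableEq ι] {s : Finset ι} {α β : ι}
    (hα : α ∉ s) (hβ : β ∉ s) : s.map (Equiv.swap α β).toEmbedding = s := by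
  ext γ
  rw [mem_map_equiv, Equiv.symm_swap]
  by_cases hγα : γ = α
  · subst hγα; simp [hα, hβ]
  by_cases hγβ : γ = β
  · subst hγβ; simp [hα, hβ]
  · rw [Equiv.swap_apply_of_ne_of_ne hγα hγβ]

/-- The component of `x` has at least `n - 1` edges on its `n` vertices, so degree sum
`≥ 2n - 2`, while the degree bounds allow at most `2n - 3`. -/
theorem SimpleGraph.Reachable.false_of_three_degree_le_one {W : Type*} [Fintype W]
    {G : SimpleGraph W} [DecidableRel G.Adj] {x y z : W}
    (hxy : x ≠ y) (hxz : x ≠ z) (hyz : y ≠ z) (hy : G.Reachable x y) (hz : G.Reachable x z)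
    (hdeg : ∀ v, G.degree v ≤ 2)
    (hx1 : G.degree x ≤ 1) (hy1 : G.degree y ≤ 1) (hz1 : G.degree z ≤ 1) : False := by
  classical
  set C := G.connectedComponentMk x
  set K := C.supp.toFinset
  have hK : {x, y, z} ⊆ K := by
    intro v hv
    simp only [mem_insert, mem_singleton] at hv
    rcases hv with rfl | rfl | rfl <;> simp [K, C, hy.symm, hz.symm, ConnectedComponent.eq]
  have hcard3 : #({x, y, z} : Finset W) = 3 := by
    rw [card_insert_of_notMem (by simp [hxy, hxz]), card_pair hyz]
  have hedges : #K ≤ #C.toSimpleGraph.edgeFinset + 1 := by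
    have := C.connected_toSimpleGraph.card_vert_le_card_edgeSet_add_one
    convert this using 1
    · rw [Nat.card_eq_fintype_card, Set.toFinset_card]; congr!
    · rw [Nat.card_eq_fintype_card, ← Set.toFinset_card]; congr!
  have hsum : 2 * #C.toSimpleGraph.edgeFinset ≤ ∑ v ∈ K, G.degree v := by
    rw [← SimpleGraph.sum_degrees_eq_twice_card_edges,
      Finset.sum_subtype K (p := (· ∈ C.supp)) (by simp [K])]
    refine Finset.sum_le_sum fun v _ => ?_
    convert (SimpleGraph.Copy.induce G C.supp).degree_le v using 1 <;> congr!
  have hsplit := Finset.sum_sdiff hK (f := fun v => G.degree v)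
  have : ∑ v ∈ K \ {x, y, z}, G.degree v ≤ #(K \ {x, y, z}) * 2 := by
    simpa using Finset.sum_le_card_nsmul _ _ 2 fun v _ => hdeg v
  rw [card_sdiff_of_subset hK, hcard3] at this
  rw [sum_insert (by simp [hxy, hxz]), sum_pair hyz] at hsplit
  have := card_le_card hK
  omega

namespace EdgeColoring

variable {V : Type*} {k : ℕ}

/-- A multigraph is its multiplicity function `m` on unordered pairs; a colouring `c` gives
each pair `e` the set of colours of its `m e` parallel edges. -/
structure IsColoring (m : Sym2 V → ℕ) (c : Sym2 V → Finset (Fin k)) : Prop where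
  card_eq : ∀ e, #(c e) = m e
  eq_of_mem : ∀ {v u u' β}, β ∈ c s(v, u) → β ∈ c s(v, u') → u = u'

def Colorable (k : ℕ) (m : Sym2 V → ℕ) : Prop :=
  ∃ c : Sym2 V → Finset (Fin k), IsColoring m c

lemma IsColoring.one_le_of_mem {m : Sym2 V → ℕ} {c : Sym2 V → Finset (Fin k)}
    (hc : IsColoring m c) {e : Sym2 V} {β : Fin k} (hβ : β ∈ c e) : 1 ≤ m e :=
  hc.card_eq e ▸ card_pos.2 ⟨β, hβ⟩

section Update

variable [DecidableEq V]

def dec (m : Sym2 V → ℕ) (e : Sym2 V) : Sym2 V → ℕ := update m e (m e - 1)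

lemma dec_le (m : Sym2 V → ℕ) (e e' : Sym2 V) : dec m e e' ≤ m e' := by
  unfold dec; rw [update_apply]; split_ifs with h <;> [subst h; skip] <;> omega

lemma dec_comm (m : Sym2 V → ℕ) (e e' : Sym2 V) : dec (dec m e) e' = dec (dec m e') e := by
  by_cases h : e = e'
  · rw [h]
  · ext f
    simp only [dec, update_apply, if_neg h, if_neg (Ne.symm h)]
    split_ifs <;> simp_all

lemma update_erase_subset (c : Sym2 V → Finset (Fin k)) (e : Sym2 V) (β : Fin k) (f : Sym2 V) :
    update c e ((c e).erase β) f ⊆ c f := by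
  rw [update_apply]; split_ifs with hf <;> [exact hf ▸ erase_subset _ _; exact subset_rfl]

lemma IsColoring.erase {m : Sym2 V → ℕ} {c : Sym2 V → Finset (Fin k)} (hc : IsColoring m c)
    {e : Sym2 V} {β : Fin k} (hβ : β ∈ c e) :
    IsColoring (dec m e) (update c e ((c e).erase β)) where
  card_eq f := by
    simp only [dec, update_apply]
    split_ifs with h
    · subst h; rw [card_erase_of_mem hβ, hc.card_eq]
    · exact hc.card_eq f
  eq_of_mem h h' :=
    hc.eq_of_mem (update_erase_subset _ _ _ _ h) (update_erase_subset _ _ _ _ h')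

def shift (c : Sym2 V → Finset (Fin k)) (x a b : V) (β : Fin k) : Sym2 V → Finset (Fin k) :=
  let c₁ := update c s(x, b) ((c s(x, b)).erase β)
  update c₁ s(x, a) (Insert.insert β (c₁ s(x, a)))

variable {c : Sym2 V → Finset (Fin k)} {x a b : V} {β : Fin k}

lemma mem_shift_of_ne {γ : Fin k} (hγ : γ ≠ β) (e : Sym2 V) :
    γ ∈ shift c x a b β e ↔ γ ∈ c e := by
  simp only [shift, update_apply]
  split_ifs <;> simp_all

lemma shift_apply_of_ne {e : Sym2 V} (ha : e ≠ s(x, a)) (hb : e ≠ s(x, b)) :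
    shift c x a b β e = c e := by
  simp [shift, update_of_ne ha, update_of_ne hb]

end Update

section Missing

variable [Fintype V]

def degree (m : Sym2 V → ℕ) (v : V) : ℕ := ∑ u, m s(v, u)

def colorsAt (c : Sym2 V → Finset (Fin k)) (v : V) : Finset (Fin k) :=
  univ.biUnion fun u => c s(v, u)

def missing (c : Sym2 V → Finset (Fin k)) (v : V) : Finset (Fin k) := (colorsAt c v)ᶜ

lemma one_le_degree {m : Sym2 V → ℕ} {x y : V} (h : 1 ≤ m s(x, y)) : 1 ≤ degree m x :=
  h.trans (single_le_sum (f := fun u => m s(x, u)) (fun _ _ => Nat.zero_le _) (mem_univ y))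

lemma exists_one_le_of_one_le_degree {m : Sym2 V → ℕ} {x : V} (h : 1 ≤ degree m x) :
    ∃ y, 1 ≤ m s(x, y) := by
  obtain ⟨y, -, hy⟩ := exists_ne_zero_of_sum_ne_zero (s := univ) (f := fun y => m s(x, y))
    (by unfold degree at h; omega)
  exact ⟨y, Nat.one_le_iff_ne_zero.2 hy⟩

lemma mem_colorsAt {c : Sym2 V → Finset (Fin k)} {v : V} {β : Fin k} :
    β ∈ colorsAt c v ↔ ∃ u, β ∈ c s(v, u) := by
  simp [colorsAt]

lemma mem_missing {c : Sym2 V → Finset (Fin k)} {v : V} {β : Fin k} :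
    β ∈ missing c v ↔ ∀ u, β ∉ c s(v, u) := by
  simp [missing, mem_colorsAt]

namespace IsColoring

variable {m : Sym2 V → ℕ} {c : Sym2 V → Finset (Fin k)}

lemma card_colorsAt (hc : IsColoring m c) (v : V) : #(colorsAt c v) = degree m v := by
  rw [colorsAt, card_biUnion fun u _ u' _ hne =>
    disjoint_left.2 fun _ h h' => hne (hc.eq_of_mem h h')]
  simp [degree, hc.card_eq]

lemma degree_le (hc : IsColoring m c) (v : V) : degree m v ≤ k := by
  simpa [hc.card_colorsAt] using card_le_univ (colorsAt c v)

lemma card_missing (hc : IsColoring m c) (v : V) : #(missing c v) = k - degree m v := by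
  rw [missing, card_compl, hc.card_colorsAt, Fintype.card_fin]

lemma card_filter_mem_le_one (hc : IsColoring m c) (v : V) (β : Fin k) :
    #{u | β ∈ c s(v, u)} ≤ 1 :=
  card_le_one.2 fun _ hu _ hu' => hc.eq_of_mem (mem_filter.1 hu).2 (mem_filter.1 hu').2

end IsColoring

def FanStep (c : Sym2 V → Finset (Fin k)) (x a b : V) : Prop :=
  ∃ β ∈ c s(x, b), β ∈ missing c a

structure IsFan (c : Sym2 V → Finset (Fin k)) (x : V) (y : ℕ → V) (r : ℕ) : Prop where
  step : ∀ i < r, FanStep c x (y i) (y (i + 1))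
  injOn : Set.InjOn y (Set.Iic r)

variable {c : Sym2 V → Finset (Fin k)} {x : V} {y : ℕ → V} {r : ℕ}

lemma IsFan.mono (hf : IsFan c x y r) {j : ℕ} (hj : j ≤ r) : IsFan c x y j :=
  ⟨fun i hi => hf.step i (by omega), hf.injOn.mono (Set.Iic_subset_Iic.2 hj)⟩

lemma IsFan.ne (hf : IsFan c x y r) {i j : ℕ} (hi : i ≤ r) (hj : j ≤ r) (hij : i ≠ j) :
    y i ≠ y j :=
  fun h => hij (hf.injOn (Set.mem_Iic.2 hi) (Set.mem_Iic.2 hj) h)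

open scoped Classical in
noncomputable def fan (c : Sym2 V → Finset (Fin k)) (x y₀ : V) : Finset V :=
  {z | Relation.ReflTransGen (FanStep c x) y₀ z}

lemma mem_fan {y₀ z : V} : z ∈ fan c x y₀ ↔ Relation.ReflTransGen (FanStep c x) y₀ z := by
  simp [fan]

lemma exists_isFan_of_mem_fan {y₀ z : V} (hz : z ∈ fan c x y₀) :
    ∃ (y : ℕ → V) (r : ℕ), y 0 = y₀ ∧ y r = z ∧ IsFan c x y r := by
  obtain ⟨y, r, h0, hr, hstep, hinj⟩ := (mem_fan.1 hz).exists_injOn_path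
  exact ⟨y, r, h0, hr, hstep, hinj⟩

end Missing

variable [Fintype V] [DecidableEq V] {m : Sym2 V → ℕ} {c : Sym2 V → Finset (Fin k)}

lemma degree_dec_add {x y : V} (hxy : x ≠ y) (h1 : 1 ≤ m s(x, y)) (v : V) :
    degree (dec m s(x, y)) v + (if v = x ∨ v = y then 1 else 0) = degree m v := by
  have hpt : ∀ u, m s(v, u) = dec m s(x, y) s(v, u) + if s(v, u) = s(x, y) then 1 else 0 := by
    intro u
    simp only [dec, update_apply]
    split_ifs with h <;> [rw [h]; skip] <;> omega
  have hcount : (∑ u, if s(v, u) = s(x, y) then 1 else 0) = if v = x ∨ v = y then 1 else 0 := by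
    by_cases hvx : v = x
    · subst hvx; simp_rw [Sym2.congr_right]; simp
    by_cases hvy : v = y
    · subst hvy; simp_rw [Sym2.eq_swap (a := x), Sym2.congr_right]; simp
    · simp [hvx, hvy]
  rw [degree, degree, ← hcount, ← sum_add_distrib]
  exact (sum_congr rfl fun u _ => hpt u).symm

lemma IsColoring.insert {x y : V} (hc : IsColoring (dec m s(x, y)) c) (h1 : 1 ≤ m s(x, y))
    {β : Fin k} (hx : β ∈ missing c x) (hy : β ∈ missing c y) :
    IsColoring m (update c s(x, y) (Insert.insert β (c s(x, y)))) where
  card_eq f := by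
    rw [update_apply]
    split_ifs with h
    · subst h
      rw [card_insert_of_notMem (mem_missing.1 hx y), hc.card_eq, dec, update_self]
      omega
    · rw [hc.card_eq, dec, update_of_ne h]
  eq_of_mem {v u u' γ} h h' := by
    have hmiss : ∀ {w}, s(v, w) = s(x, y) → ∀ w', β ∉ c s(v, w') := by
      intro w he
      rcases Sym2.eq_iff.1 he with ⟨rfl, -⟩ | ⟨rfl, -⟩
      exacts [mem_missing.1 hx, mem_missing.1 hy]
    rw [update_apply] at h h'
    by_cases hu : s(v, u) = s(x, y) <;> by_cases hu' : s(v, u') = s(x, y) <;>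
      simp only [hu, hu', if_true, if_false] at h h'
    · exact Sym2.congr_right.1 (hu.trans hu'.symm)
    · rcases mem_insert.1 h with rfl | h
      · exact absurd h' (hmiss hu u')
      · exact hc.eq_of_mem (hu ▸ h) h'
    · rcases mem_insert.1 h' with rfl | h'
      · exact absurd h (hmiss hu' u)
      · exact hc.eq_of_mem h (hu' ▸ h')
    · exact hc.eq_of_mem h h'

section Shift

variable {x a b : V} {β : Fin k}

lemma IsColoring.shift (hc : IsColoring (dec m s(x, a)) c) (h1 : 1 ≤ m s(x, a)) (hab : a ≠ b)
    (hβb : β ∈ c s(x, b)) (hβa : β ∈ missing c a) :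
    IsColoring (dec m s(x, b)) (shift c x a b β) := by
  have hne : s(x, a) ≠ s(x, b) := fun h => hab (Sym2.congr_right.1 h)
  have hc₁ := hc.erase hβb
  rw [dec_comm] at hc₁
  refine hc₁.insert (by rwa [dec, update_of_ne hne]) (mem_missing.2 fun u hu => ?_)
    (mem_missing.2 fun u hu => mem_missing.1 hβa u (update_erase_subset _ _ _ _ hu))
  rw [update_apply] at hu
  split_ifs at hu with h
  · exact notMem_erase β _ hu
  · exact h (by rw [hc.eq_of_mem hu hβb])

lemma colorsAt_shift (hβb : β ∈ c s(x, b)) : colorsAt (shift c x a b β) x = colorsAt c x := by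
  ext γ
  by_cases hγ : γ = β
  · subst hγ
    exact iff_of_true (mem_colorsAt.2 ⟨a, by simp [shift]⟩) (mem_colorsAt.2 ⟨b, hβb⟩)
  · simp only [mem_colorsAt, mem_shift_of_ne hγ]

lemma missing_subset_shift (hβb : β ∈ c s(x, b)) {v : V} (hva : v ≠ a) :
    missing c v ⊆ missing (shift c x a b β) v := by
  intro γ hγ
  rw [mem_missing] at hγ ⊢
  intro u hu
  by_cases hγβ : γ = β
  · subst hγβ
    simp only [shift] at hu
    rw [update_apply] at hu
    split_ifs at hu with h
    · rcases Sym2.eq_iff.1 h with ⟨rfl, -⟩ | ⟨rfl, -⟩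
      · exact hγ b hβb
      · exact hva rfl
    · exact hγ u (update_erase_subset _ _ _ _ hu)
  · exact hγ u ((mem_shift_of_ne hγβ _).1 hu)

end Shift

namespace IsFan

variable {x : V} {y : ℕ → V} {r : ℕ}

/-- Shifting colours down the fan moves the uncoloured edge from `s(x, y 0)` to `s(x, y r)`. -/
lemma exists_coloring (hc : IsColoring (dec m s(x, y 0)) c) (h1 : 1 ≤ m s(x, y 0))
    (hf : IsFan c x y r) :
    ∃ c', IsColoring (dec m s(x, y r)) c' ∧ colorsAt c' x = colorsAt c x ∧
      missing c (y r) ⊆ missing c' (y r) ∧ 1 ≤ m s(x, y r) := by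
  induction r generalizing c y with
  | zero => exact ⟨c, hc, rfl, subset_rfl, h1⟩
  | succ r ih =>
    obtain ⟨β, hβ1, hβ0⟩ := hf.step 0 (by omega)
    have hy0 : ∀ i ≤ r, y (i + 1) ≠ y 0 := fun i hi => hf.ne (by omega) (by omega) (by omega)
    have hinj : Set.InjOn (fun i => y (i + 1)) (Set.Iic r) := fun i hi j hj h =>
      Nat.succ_injective (hf.injOn (Set.mem_Iic.2 (Nat.succ_le_succ hi))
        (Set.mem_Iic.2 (Nat.succ_le_succ hj)) h)
    have hf₂ : IsFan (shift c x (y 0) (y 1) β) x (fun i => y (i + 1)) r := by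
      refine ⟨fun i hi => ?_, hinj⟩
      obtain ⟨β', hβ', hmiss⟩ := hf.step (i + 1) (by omega)
      refine ⟨β', ?_, missing_subset_shift hβ1 (hy0 i (by omega)) hmiss⟩
      rwa [shift_apply_of_ne (fun h => hy0 (i + 1) (by omega) (Sym2.congr_right.1 h))
        (fun h => hf.ne (by omega) (by omega) (by omega) (Sym2.congr_right.1 h))]
    obtain ⟨c', hc', hcol, hsub, h1'⟩ :=
      ih (y := fun i => y (i + 1)) (hc.shift h1 (hy0 0 (by omega)).symm hβ1 hβ0)
        (hc.one_le_of_mem hβ1 |>.trans (dec_le _ _ _)) hf₂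
    exact ⟨c', hc', hcol.trans (colorsAt_shift hβ1),
      (missing_subset_shift hβ1 (hy0 r le_rfl)).trans hsub, h1'⟩

lemma colorable (hc : IsColoring (dec m s(x, y 0)) c) (h1 : 1 ≤ m s(x, y 0))
    (hf : IsFan c x y r) {γ : Fin k} (hx : γ ∈ missing c x) (hy : γ ∈ missing c (y r)) :
    Colorable k m := by
  obtain ⟨c', hc', hcol, hsub, h1'⟩ := hf.exists_coloring hc h1
  exact ⟨_, hc'.insert h1' (by rwa [missing, hcol]) (hsub hy)⟩

end IsFan

section Kempe

variable {α β : Fin k}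

def kempeGraph (c : Sym2 V → Finset (Fin k)) (α β : Fin k) : SimpleGraph V where
  Adj u v := u ≠ v ∧ (α ∈ c s(u, v) ∨ β ∈ c s(u, v))
  symm := ⟨fun u v h => ⟨h.1.symm, by rw [Sym2.eq_swap]; exact h.2⟩⟩
  loopless := ⟨fun u h => h.1 rfl⟩

instance : DecidableRel (kempeGraph c α β).Adj :=
  fun u v => inferInstanceAs (Decidable (u ≠ v ∧ (α ∈ c s(u, v) ∨ β ∈ c s(u, v))))

open scoped Classical in
noncomputable def kempeSwap (c : Sym2 V → Finset (Fin k)) (α β : Fin k) (z : V) :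
    Sym2 V → Finset (Fin k) :=
  fun e => if ∃ v ∈ e, (kempeGraph c α β).Reachable z v then
    (c e).map (Equiv.swap α β).toEmbedding else c e

variable {z u : V}

lemma kempeSwap_of_reachable (hu : (kempeGraph c α β).Reachable z u) (v : V) :
    kempeSwap c α β z s(u, v) = (c s(u, v)).map (Equiv.swap α β).toEmbedding :=
  if_pos ⟨u, Sym2.mem_mk_left u v, hu⟩

lemma kempeSwap_of_not_reachable (hu : ¬(kempeGraph c α β).Reachable z u) (v : V) :
    kempeSwap c α β z s(u, v) = c s(u, v) := by
  unfold kempeSwap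
  split_ifs with h
  · obtain ⟨w, hw, hzw⟩ := h
    rcases Sym2.mem_iff.1 hw with rfl | rfl
    · exact absurd hzw hu
    have hvu : ¬(kempeGraph c α β).Adj w u := fun hadj => hu (hzw.trans hadj.reachable)
    simp only [kempeGraph, not_and, not_or] at hvu
    by_cases huw : w = u
    · exact absurd (huw ▸ hzw) hu
    · rw [Sym2.eq_swap]
      exact map_swap_eq_self (hvu huw).1 (hvu huw).2
  · rfl

lemma IsColoring.kempeSwap (hc : IsColoring m c) (α β : Fin k) (z : V) :
    IsColoring m (kempeSwap c α β z) where
  card_eq e := by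
    unfold EdgeColoring.kempeSwap
    split_ifs
    · rw [card_map, hc.card_eq]
    · exact hc.card_eq e
  eq_of_mem {v u u' γ} h h' := by
    by_cases hv : (kempeGraph c α β).Reachable z v
    · rw [kempeSwap_of_reachable hv, mem_map_equiv] at h h'
      exact hc.eq_of_mem h h'
    · rw [kempeSwap_of_not_reachable hv] at h h'
      exact hc.eq_of_mem h h'

lemma mem_missing_kempeSwap (hu : (kempeGraph c α β).Reachable z u) {γ : Fin k} :
    γ ∈ missing (kempeSwap c α β z) u ↔ Equiv.swap α β γ ∈ missing c u := by
  simp only [mem_missing, kempeSwap_of_reachable hu, mem_map_equiv, Equiv.symm_swap]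

lemma missing_kempeSwap (hu : ¬(kempeGraph c α β).Reachable z u) :
    missing (kempeSwap c α β z) u = missing c u := by
  ext γ
  simp only [mem_missing, kempeSwap_of_not_reachable hu]

lemma degree_kempeGraph_le (v : V) :
    (kempeGraph c α β).degree v ≤ #{u | α ∈ c s(v, u)} + #{u | β ∈ c s(v, u)} := by
  rw [← SimpleGraph.card_neighborFinset_eq_degree]
  refine (card_le_card fun u hu => ?_).trans (card_union_le _ _)
  rcases ((SimpleGraph.mem_neighborFinset _ _ _).1 hu).2 with h | h <;> simp [h]

lemma IsColoring.degree_kempeGraph_le_two (hc : IsColoring m c) (v : V) :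
    (kempeGraph c α β).degree v ≤ 2 :=
  (degree_kempeGraph_le v).trans
    (add_le_add (hc.card_filter_mem_le_one v α) (hc.card_filter_mem_le_one v β))

lemma IsColoring.degree_kempeGraph_le_one (hc : IsColoring m c) {v : V}
    (h : α ∈ missing c v ∨ β ∈ missing c v) : (kempeGraph c α β).degree v ≤ 1 := by
  have hempty : ∀ γ ∈ missing c v, #{u | γ ∈ c s(v, u)} = 0 := fun γ hγ => by
    simpa [filter_eq_empty_iff] using mem_missing.1 hγ
  refine (degree_kempeGraph_le v).trans ?_
  rcases h with h | h
  · simpa [hempty α h] using hc.card_filter_mem_le_one v β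
  · simpa [hempty β h] using hc.card_filter_mem_le_one v α

/-- Otherwise swap `α` and `β` on the Kempe component of `y r`: by induction no earlier fan
vertex there misses `β`, so the fan survives, and now `α` is missing at both `x` and `y r`. -/
lemma IsFan.reachable_kempeGraph (hnc : ¬Colorable k m) {x : V} {y : ℕ → V}
    (hc : IsColoring (dec m s(x, y 0)) c) (h1 : 1 ≤ m s(x, y 0)) (hα : α ∈ missing c x)
    {r : ℕ} (hf : IsFan c x y r) (hβ : β ∈ missing c (y r)) :
    (kempeGraph c α β).Reachable (y r) x := by
  induction r using Nat.strong_induction_on with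
  | _ r ih =>
  by_contra hx
  have hearlier : ∀ i < r, (kempeGraph c α β).Reachable (y r) (y i) → β ∉ missing c (y i) :=
    fun i hi hri hβi => hx (hri.trans (ih i hi (hf.mono hi.le) hβi))
  have hf₂ : IsFan (kempeSwap c α β (y r)) x y r := by
    refine ⟨fun i hi => ?_, hf.injOn⟩
    obtain ⟨γ, hγ, hγi⟩ := hf.step i hi
    refine ⟨γ, by rwa [kempeSwap_of_not_reachable hx], ?_⟩
    by_cases hri : (kempeGraph c α β).Reachable (y r) (y i)
    · have hγα : γ ≠ α := fun h => mem_missing.1 hα _ (h ▸ hγ)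
      have hγβ : γ ≠ β := fun h => hearlier i hi hri (h ▸ hγi)
      rwa [mem_missing_kempeSwap hri, Equiv.swap_apply_of_ne_of_ne hγα hγβ]
    · rwa [missing_kempeSwap hri]
  refine hnc (hf₂.colorable (hc.kempeSwap α β (y r)) h1 (γ := α) ?_ ?_)
  · rwa [missing_kempeSwap hx]
  · rwa [mem_missing_kempeSwap SimpleGraph.Reachable.rfl, Equiv.swap_apply_left]

end Kempe

section FanInequality

variable {x y₀ : V}

lemma one_le_of_mem_fan (hc : IsColoring (dec m s(x, y₀)) c) (h1 : 1 ≤ m s(x, y₀)) {z : V}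
    (hz : z ∈ fan c x y₀) : 1 ≤ m s(x, z) := by
  rcases (mem_fan.1 hz).cases_tail with rfl | ⟨a, -, β, hβ, -⟩
  · exact h1
  · exact (hc.one_le_of_mem hβ).trans (dec_le _ _ _)

/-- Both vertices lie in the `α`/`β` Kempe component of `x`, which would then contain three
vertices of degree at most one. -/
lemma disjoint_missing_of_mem_fan (hnc : ¬Colorable k m) (hloop : m s(x, x) = 0)
    (hc : IsColoring (dec m s(x, y₀)) c) (h1 : 1 ≤ m s(x, y₀)) {α : Fin k}
    (hα : α ∈ missing c x) {z z' : V} (hz : z ∈ fan c x y₀) (hz' : z' ∈ fan c x y₀)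
    (hzz' : z ≠ z') : Disjoint (missing c z) (missing c z') := by
  refine disjoint_left.2 fun β hβ hβ' => ?_
  have hreach : ∀ {w}, w ∈ fan c x y₀ → β ∈ missing c w →
      (kempeGraph c α β).Reachable x w := fun hw hβw => by
    obtain ⟨y, r, rfl, rfl, hf⟩ := exists_isFan_of_mem_fan hw
    exact (hf.reachable_kempeGraph hnc hc h1 hα hβw).symm
  have hne : ∀ {w}, w ∈ fan c x y₀ → x ≠ w := fun hw h => by
    have := one_le_of_mem_fan hc h1 hw
    rw [← h, hloop] at this
    omega
  exact SimpleGraph.Reachable.false_of_three_degree_le_one (hne hz) (hne hz') hzz'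
    (hreach hz hβ) (hreach hz' hβ') hc.degree_kempeGraph_le_two
    (hc.degree_kempeGraph_le_one (Or.inl hα)) (hc.degree_kempeGraph_le_one (Or.inr hβ))
    (hc.degree_kempeGraph_le_one (Or.inr hβ'))

lemma missing_subset_biUnion_fan (hnc : ¬Colorable k m) (hc : IsColoring (dec m s(x, y₀)) c)
    (h1 : 1 ≤ m s(x, y₀)) {z : V} (hz : z ∈ fan c x y₀) :
    missing c z ⊆ (fan c x y₀).biUnion fun u => c s(x, u) := by
  intro γ hγ
  obtain ⟨y, r, rfl, rfl, hf⟩ := exists_isFan_of_mem_fan hz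
  have hγx : γ ∉ missing c x := fun hγx => hnc (hf.colorable hc h1 hγx hγ)
  obtain ⟨u, hu⟩ := mem_colorsAt.1 (by simpa [missing] using hγx)
  exact mem_biUnion.2 ⟨u, mem_fan.2 ((mem_fan.1 hz).tail ⟨γ, hu, hγ⟩), hu⟩

lemma sum_card_missing_le (hnc : ¬Colorable k m) (hloop : m s(x, x) = 0)
    (hc : IsColoring (dec m s(x, y₀)) c) (h1 : 1 ≤ m s(x, y₀)) {α : Fin k}
    (hα : α ∈ missing c x) :
    ∑ z ∈ fan c x y₀, #(missing c z) ≤ ∑ z ∈ fan c x y₀, #(c s(x, z)) :=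
  calc ∑ z ∈ fan c x y₀, #(missing c z) = #((fan c x y₀).biUnion (missing c)) :=
        (card_biUnion fun _ hz _ hz' => disjoint_missing_of_mem_fan hnc hloop hc h1 hα hz hz').symm
    _ ≤ #((fan c x y₀).biUnion fun z => c s(x, z)) :=
        card_le_card (biUnion_subset.2 fun _ hz => missing_subset_biUnion_fan hnc hc h1 hz)
    _ ≤ ∑ z ∈ fan c x y₀, #(c s(x, z)) := card_biUnion_le

/-- As `#(missing c z) = k - d_m(z) + [z = y₀]` and `#(c s(x, z)) = m(xz) - [z = y₀]` on the
fan, this is `sum_card_missing_le`. -/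
lemma exists_fan_of_not_colorable (hnc : ¬Colorable k m) (hloop : ∀ v, m s(v, v) = 0)
    (hx : degree m x ≤ k) (hc : IsColoring (dec m s(x, y₀)) c) (h1 : 1 ≤ m s(x, y₀)) :
    ∃ F : Finset V, y₀ ∈ F ∧ (∀ z ∈ F, 1 ≤ m s(x, z)) ∧
      k * #F + 2 ≤ ∑ z ∈ F, (degree m z + m s(x, z)) := by
  have hy₀F : y₀ ∈ fan c x y₀ := mem_fan.2 .refl
  have hzx : ∀ z ∈ fan c x y₀, z ≠ x := fun z hz h => by
    simpa [h, hloop] using one_le_of_mem_fan hc h1 hz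
  have hxy₀ : x ≠ y₀ := (hzx y₀ hy₀F).symm
  obtain ⟨α, hα⟩ : (missing c x).Nonempty := by
    have := degree_dec_add hxy₀ h1 x
    rw [← card_pos, hc.card_missing]
    simp only [true_or, if_true] at this
    omega
  have hterm : ∀ z ∈ fan c x y₀, k + 2 * (if z = y₀ then 1 else 0) + #(c s(x, z)) =
      #(missing c z) + (degree m z + m s(x, z)) := by
    intro z hz
    have h₁ := degree_dec_add hxy₀ h1 z
    have h₂ := hc.degree_le z
    have h₃ : dec m s(x, y₀) s(x, z) + (if z = y₀ then 1 else 0) = m s(x, z) := by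
      simp only [dec, update_apply, Sym2.congr_right]
      split_ifs with h <;> [subst h; skip] <;> omega
    simp only [hzx z hz, false_or] at h₁
    rw [hc.card_missing, hc.card_eq]
    split_ifs at h₁ h₃ ⊢ <;> omega
  refine ⟨fan c x y₀, hy₀F, fun z hz => one_le_of_mem_fan hc h1 hz, ?_⟩
  have hsum := sum_congr rfl hterm
  rw [sum_add_distrib, sum_add_distrib, sum_add_distrib, ← mul_sum, sum_ite_eq', if_pos hy₀F,
    sum_const, smul_eq_mul] at hsum
  linarith [sum_card_missing_le hnc (hloop x) hc h1 hα]

end FanInequality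

end EdgeColoring

/-- The first `S (i + 1)` that meets `T` would gain two vertices of `T` other than `u i`. -/
theorem HasFullBQueue.eq_empty {V : Type*} [Fintype V] {B : SimpleGraph V}
    (hq : HasFullBQueue B) {T : Set V}
    (hT : ∀ x, (x ∈ T ∨ ∃ w ∈ T, B.Adj x w) →
      ∃ z₁ z₂, z₁ ≠ z₂ ∧ B.Adj x z₁ ∧ z₁ ∈ T ∧ B.Adj x z₂ ∧ z₂ ∈ T) :
    T = ∅ := by
  classical
  obtain ⟨q, u, S, -, hS0, hS, -, hSone, hSq⟩ := hq
  by_contra hne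
  obtain ⟨w₀, hw₀⟩ := Set.nonempty_iff_ne_empty.2 hne
  have hex : ∃ j, ∃ w ∈ S j, w ∈ T := ⟨q, w₀, hSq ▸ Set.mem_univ w₀, hw₀⟩
  obtain ⟨w, hw, hwT⟩ := Nat.find_spec hex
  obtain ⟨i, hi⟩ : ∃ i, Nat.find hex = i + 1 :=
    Nat.exists_eq_succ_of_ne_zero fun h0 => by rw [h0, hS0] at hw; exact hw
  have hiq : i < q := by
    have := Nat.find_min' hex ⟨w₀, hSq ▸ Set.mem_univ w₀, hw₀⟩
    omega
  have hSi : ∀ z ∈ S i, z ∉ T := fun z hz hzT => Nat.find_min hex (by omega) ⟨z, hz, hzT⟩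
  rw [hi, hS i hiq] at hw
  have hui : u i ∈ T ∨ ∃ w ∈ T, B.Adj (u i) w := by
    rcases hw with (hw | rfl) | hw
    · exact Or.inr ⟨w, hwT, hw⟩
    · exact Or.inl hwT
    · exact absurd hwT (hSi w hw)
  obtain ⟨z₁, z₂, hz, h₁, hT₁, h₂, hT₂⟩ := hT (u i) hui
  have hnew : ∀ z, B.Adj (u i) z → z ∈ T → z ∈ S (i + 1) \ (S i ∪ {u i}) := by
    intro z hadj hzT
    rw [hS i hiq]
    refine ⟨Or.inl (Or.inl hadj), ?_⟩
    rintro (hz | rfl)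
    exacts [hSi z hz hzT, B.loopless.irrefl _ hadj]
  have := (Set.one_lt_ncard_iff (Set.toFinite _)).2 ⟨z₁, z₂, hnew z₁ h₁ hT₁, hnew z₂ h₂ hT₂, hz⟩
  have := hSone i hiq
  omega

namespace Multigraph

open EdgeColoring

variable {V : Type*} [Fintype V] (G : Multigraph V)

def mult : Sym2 V → ℕ := Sym2.lift ⟨G.mu, G.symm⟩

lemma chromaticIndex_le_of_colorable {k : ℕ} (h : Colorable k G.mult) :
    G.chromaticIndex ≤ k := by
  obtain ⟨c, hc⟩ := h
  refine Nat.sInf_le ⟨fun i u v => if i ∈ c s(u, v) then 1 else 0, fun i u v => by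
    dsimp only; rw [Sym2.eq_swap], fun i u v => by dsimp only; split <;> omega,
    fun i v => ?_, fun u v => ?_⟩
  · dsimp only
    rw [sum_boole]
    exact_mod_cast hc.card_filter_mem_le_one v i
  · dsimp only
    rw [sum_boole, filter_mem_eq_inter, univ_inter, hc.card_eq]
    simp [mult]

def IsCore (t : ℕ) (v : V) : Prop := G.maxDeg + t < G.deg v + G.locMult v

def tightCore (t : ℕ) (m : Sym2 V → ℕ) : Set V := {z | G.IsCore t z ∧ degree m z = G.maxDeg}

variable {G} {t : ℕ} {m : Sym2 V → ℕ} {B : SimpleGraph V}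

lemma deg_le_maxDeg (v : V) : G.deg v ≤ G.maxDeg := le_sup (mem_univ v)

lemma degree_le_deg (hle : ∀ u v, m s(u, v) ≤ G.mu u v) (v : V) : degree m v ≤ G.deg v :=
  sum_le_sum fun u _ => hle v u

lemma eq_mu_of_deg_le (hle : ∀ u v, m s(u, v) ≤ G.mu u v) {v : V}
    (hv : G.deg v ≤ degree m v) (u : V) : m s(v, u) = G.mu v u :=
  (sum_eq_sum_iff_of_le fun u _ => hle v u).1
    (le_antisymm (degree_le_deg hle v) hv) u (mem_univ u)

lemma mu_le_of_isCore (hmul : ∀ u v, (G.tCore t).mu u v ≤ t + 1) {u v : V}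
    (hu : G.IsCore t u) (hv : G.IsCore t v) : G.mu u v ≤ t + 1 := by
  have := hmul u v
  simp only [tCore] at this
  rwa [if_pos ⟨hu, hv⟩] at this

lemma adj_iff (hB : ∀ u v, B.Adj u v ↔ (G.tCore t).mu u v = t + 1) {u v : V} :
    B.Adj u v ↔ G.IsCore t u ∧ G.IsCore t v ∧ G.mu u v = t + 1 := by
  rw [hB, tCore]
  dsimp only
  split_ifs with h
  · exact ⟨fun h' => ⟨h.1, h.2, h'⟩, fun h' => h'.2.2⟩
  · exact ⟨False.elim, fun h' => absurd ⟨h'.1, h'.2.1⟩ h⟩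

lemma isCore_of_lt (hle : ∀ u v, m s(u, v) ≤ G.mu u v) {x z : V}
    (h : G.maxDeg + t < degree m z + m s(x, z)) : G.IsCore t z ∧ t + 1 ≤ m s(x, z) := by
  have h₁ := degree_le_deg hle z
  have h₂ := deg_le_maxDeg (G := G) z
  have h₃ : m s(x, z) ≤ G.locMult z := by
    rw [Sym2.eq_swap]; exact (hle z x).trans (le_sup (mem_univ x))
  exact ⟨by unfold IsCore; omega, by omega⟩

variable [DecidableEq V]

structure IsCritical (G : Multigraph V) (k : ℕ) (m : Sym2 V → ℕ) : Prop where
  le : ∀ u v, m s(u, v) ≤ G.mu u v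
  not_colorable : ¬Colorable k m
  colorable_dec : ∀ e, 1 ≤ m e → Colorable k (dec m e)

namespace IsCritical

lemma exists_one_le {k : ℕ} (hm : G.IsCritical k m) : ∃ x y, 1 ≤ m s(x, y) := by
  by_contra! h
  refine hm.not_colorable ⟨fun _ => ∅, fun e => ?_, by simp⟩
  induction e using Sym2.ind with
  | _ x y => simpa using (Nat.lt_one_iff.1 (h x y)).symm

lemma exists_fan (hm : G.IsCritical (G.maxDeg + t) m) {x y₀ : V} (h1 : 1 ≤ m s(x, y₀)) :
    ∃ F : Finset V, y₀ ∈ F ∧ (∀ z ∈ F, 1 ≤ m s(x, z)) ∧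
      (G.maxDeg + t) * #F + 2 ≤ ∑ z ∈ F, (degree m z + m s(x, z)) := by
  obtain ⟨c, hc⟩ := hm.colorable_dec _ h1
  exact exists_fan_of_not_colorable hm.not_colorable
    (fun v => Nat.le_zero.1 (G.loopless v ▸ hm.le v v))
    ((degree_le_deg hm.le x).trans ((deg_le_maxDeg x).trans (Nat.le_add_right _ _))) hc h1

/-- Two vertices of a fan at a core vertex exceed `Δ + t`; with `μ_H ≤ t + 1` they must be
tight core vertices joined to it by `t + 1` edges. -/
lemma exists_two_tight_neighbors (hm : G.IsCritical (G.maxDeg + t) m)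
    (hmul : ∀ u v, (G.tCore t).mu u v ≤ t + 1)
    (hB : ∀ u v, B.Adj u v ↔ (G.tCore t).mu u v = t + 1) {x : V} (hx : G.IsCore t x)
    (hdx : 1 ≤ degree m x) :
    ∃ z₁ z₂, z₁ ≠ z₂ ∧ B.Adj x z₁ ∧ z₁ ∈ G.tightCore t m ∧ B.Adj x z₂ ∧ z₂ ∈ G.tightCore t m := by
  obtain ⟨y₀, h1⟩ := exists_one_le_of_one_le_degree hdx
  obtain ⟨F, -, -, hineq⟩ := hm.exists_fan h1
  have hheavy : ∀ z, G.maxDeg + t < degree m z + m s(x, z) →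
      B.Adj x z ∧ z ∈ G.tightCore t m ∧ degree m z + m s(x, z) = G.maxDeg + t + 1 := by
    intro z h
    obtain ⟨hz, htm⟩ := isCore_of_lt hm.le h
    have h₁ := mu_le_of_isCore hmul hx hz
    have h₂ := hm.le x z
    have h₃ := (degree_le_deg hm.le z).trans (deg_le_maxDeg z)
    exact ⟨(adj_iff hB).2 ⟨hx, hz, by omega⟩, ⟨hz, by omega⟩, by omega⟩
  set Fh := F.filter fun z => G.maxDeg + t < degree m z + m s(x, z)
  have hsum : ∑ z ∈ F, (degree m z + m s(x, z)) ≤ (G.maxDeg + t) * #F + #Fh := by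
    rw [card_filter, mul_comm, ← smul_eq_mul, ← sum_const, ← sum_add_distrib]
    refine sum_le_sum fun z _ => ?_
    split_ifs with h
    · exact (hheavy z h).2.2.le
    · omega
  obtain ⟨z₁, hz₁, z₂, hz₂, hne⟩ := one_lt_card.1 (by omega : 1 < #Fh)
  obtain ⟨h₁, hT₁, -⟩ := hheavy z₁ (mem_filter.1 hz₁).2
  obtain ⟨h₂, hT₂, -⟩ := hheavy z₂ (mem_filter.1 hz₂).2
  exact ⟨z₁, z₂, hne, h₁, hT₁, h₂, hT₂⟩

lemma tightCore_nonempty (hm : G.IsCritical (G.maxDeg + t) m)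
    (hmul : ∀ u v, (G.tCore t).mu u v ≤ t + 1)
    (hB : ∀ u v, B.Adj u v ↔ (G.tCore t).mu u v = t + 1) : (G.tightCore t m).Nonempty := by
  obtain ⟨x, y₀, h1⟩ := hm.exists_one_le
  obtain ⟨F, -, -, hineq⟩ := hm.exists_fan h1
  obtain ⟨z, -, hz⟩ : ∃ z ∈ F, G.maxDeg + t < degree m z + m s(x, z) := by
    by_contra! h
    have := sum_le_sum h
    rw [sum_const, smul_eq_mul] at this
    linarith
  obtain ⟨hzc, htm⟩ := isCore_of_lt hm.le hz
  obtain ⟨z₁, -, -, -, hT, -⟩ := hm.exists_two_tight_neighbors hmul hB hzc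
    (one_le_degree (y := x) (by rw [Sym2.eq_swap]; omega))
  exact ⟨z₁, hT⟩

lemma isCore_and_one_le_degree (hm : G.IsCritical (G.maxDeg + t) m)
    (hB : ∀ u v, B.Adj u v ↔ (G.tCore t).mu u v = t + 1) {x : V}
    (hx : x ∈ G.tightCore t m ∨ ∃ w ∈ G.tightCore t m, B.Adj x w) :
    G.IsCore t x ∧ 1 ≤ degree m x := by
  rcases hx with ⟨hx, hdx⟩ | ⟨w, ⟨-, hdw⟩, hxw⟩
  · obtain ⟨a, b, h1⟩ := hm.exists_one_le
    have := (one_le_degree h1).trans ((degree_le_deg hm.le a).trans (deg_le_maxDeg a))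
    exact ⟨hx, by omega⟩
  · obtain ⟨hx, -, hμ⟩ := (adj_iff hB).1 hxw
    have hwx := eq_mu_of_deg_le hm.le (hdw ▸ deg_le_maxDeg w) x
    rw [G.symm, hμ, Sym2.eq_swap] at hwx
    exact ⟨hx, one_le_degree (y := w) (by omega)⟩

end IsCritical

theorem colorable_of_le (hmul : ∀ u v, (G.tCore t).mu u v ≤ t + 1)
    (hB : ∀ u v, B.Adj u v ↔ (G.tCore t).mu u v = t + 1) (hq : HasFullBQueue B)
    (m : Sym2 V → ℕ) (hle : ∀ u v, m s(u, v) ≤ G.mu u v) : Colorable (G.maxDeg + t) m := by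
  induction h : ∑ e, m e using Nat.strong_induction_on generalizing m with
  | _ n ih =>
  by_contra hnc
  have hm : G.IsCritical (G.maxDeg + t) m := by
    refine ⟨hle, hnc, fun e he => ih _ ?_ _ (fun u v => (dec_le m e _).trans (hle u v)) rfl⟩
    refine h ▸ sum_lt_sum (fun f _ => dec_le m e f) ⟨e, mem_univ e, ?_⟩
    rw [dec, update_self]
    omega
  refine (hm.tightCore_nonempty hmul hB).ne_empty (hq.eq_empty fun x hx => ?_)
  obtain ⟨hxc, hdx⟩ := hm.isCore_and_one_le_degree hB hx
  exact hm.exists_two_tight_neighbors hmul hB hxc hdx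

end Multigraph

/-- Theorem (B-queue core): if the t-core H of G has multiplicity at most t+1 and the
simple graph B of its multiplicity-(t+1) edges has a full B-queue, then
χ'(G) ≤ Δ(G) + t. -/
theorem stmt1 {V : Type*} [Fintype V] (G : Multigraph V) (t : ℕ)
    (H : Multigraph V) (hH : H = G.tCore t)
    (hmul : ∀ u v, H.mu u v ≤ t + 1)
    (B : SimpleGraph V) (hB : ∀ u v, B.Adj u v ↔ H.mu u v = t + 1)
    (hq : HasFullBQueue B) :
    G.chromaticIndex ≤ G.maxDeg + t := by
  classical
  subst hH
  exact G.chromaticIndex_le_of_colorable <|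
    Multigraph.colorable_of_le hmul hB hq G.mult fun u v => (Sym2.lift_mk _ u v).le
end

section
/- Let t ≥ 0 be an integer and let H be a loopless multigraph on a finite vertex set of constant multiplicity t+1, i.e. μ_H(u,v) ∈ {0, t+1} for all u,v. For a subgraph K of H, let Z(K) = {v : d_K(v) ≥ 1 and d_K(v) = d_H(v)}. Then the following are equivalent: (i) corefan(H) ≤ t; (ii) for every nonempty full-multiplicity subgraph K of H there is an edge (x,y) of K such that |(N_H(x) ∩ Z(K)) \ {y}| ≤ d_H(y) − d_K(y). -/
namespace Multigraph

variable {V : Type*} [Fintype V]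

/-- K is a subgraph of H (same vertex set, smaller multiplicities). -/
def IsSubgraph (K H : Multigraph V) : Prop := ∀ u v, K.mu u v ≤ H.mu u v

/-- K has at least one edge. -/
def HasEdge (K : Multigraph V) : Prop := ∃ u v, 1 ≤ K.mu u v

/-- The cfan degree cdeg_{H,K}(x,y): least l such that
∑_{z∈Z}(d_K(z) − d_H(z) + μ_K(x,z) − l) ≤ 1 for every Z ⊆ N_K(x) with y ∈ Z. -/
noncomputable def cdeg (H K : Multigraph V) (x y : V) : ℕ :=
  sInf { l : ℕ | ∀ Z : Finset V, (∀ z ∈ Z, 1 ≤ K.mu x z) → y ∈ Z →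
    ∑ z ∈ Z, ((K.deg z : ℤ) - (H.deg z : ℤ) + (K.mu x z : ℤ) - (l : ℤ)) ≤ 1 }

/-- The cfan number corefan(H): max over nonempty subgraphs K of H of the min of
cdeg_{H,K}(x,y) over edges xy of K (0 if H is edgeless). -/
noncomputable def corefan (H : Multigraph V) : ℕ :=
  sSup { n | ∃ K : Multigraph V, IsSubgraph K H ∧ HasEdge K ∧
    n = sInf { m | ∃ x y, 1 ≤ K.mu x y ∧ m = cdeg H K x y } }

end Multigraph

namespace Multigraph

variable {V : Type*} [Fintype V]

/-- K is a full-multiplicity subgraph of H: each edge kept keeps all its copies. -/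
def FullMult (K H : Multigraph V) : Prop := ∀ u v, K.mu u v = 0 ∨ K.mu u v = H.mu u v

end Multigraph

namespace Multigraph

variable {V : Type*} [Fintype V]

lemma deg_le_deg {K H : Multigraph V} (h : IsSubgraph K H) (v : V) :
    K.deg v ≤ H.deg v :=
  Finset.sum_le_sum fun u _ => h v u

lemma mu_le_deg (K : Multigraph V) (v u : V) : K.mu v u ≤ K.deg v :=
  Finset.single_le_sum (f := K.mu v) (fun _ _ => Nat.zero_le _) (Finset.mem_univ u)

lemma mu_eq_of_deg_eq {K H : Multigraph V} (h : IsSubgraph K H) {z : V}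
    (hd : K.deg z = H.deg z) (u : V) : K.mu z u = H.mu z u :=
  ((Finset.sum_eq_sum_iff_of_le (fun u _ => h z u)).1 hd) u (Finset.mem_univ u)

/-- The degree of x is always in the defining set of `cdeg H K x y`. -/
lemma degx_mem_cdeg_set {K H : Multigraph V} (hsub : IsSubgraph K H) (x y : V) :
    K.deg x ∈ { l : ℕ | ∀ Z : Finset V, (∀ z ∈ Z, 1 ≤ K.mu x z) → y ∈ Z →
      ∑ z ∈ Z, ((K.deg z : ℤ) - (H.deg z : ℤ) + (K.mu x z : ℤ) - (l : ℤ)) ≤ 1 } := by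
  intro Z _ _
  have : ∑ z ∈ Z, ((K.deg z : ℤ) - (H.deg z : ℤ) + (K.mu x z : ℤ) - (K.deg x : ℤ)) ≤ 0 := by
    apply Finset.sum_nonpos
    intro z _
    have h1 := deg_le_deg hsub z
    have h2 := mu_le_deg K x z
    push_cast
    omega
  omega

lemma cdeg_le_of_cond {K H : Multigraph V} {x y : V} {t : ℕ}
    (h : ∀ Z : Finset V, (∀ z ∈ Z, 1 ≤ K.mu x z) → y ∈ Z →
      ∑ z ∈ Z, ((K.deg z : ℤ) - (H.deg z : ℤ) + (K.mu x z : ℤ) - (t : ℤ)) ≤ 1) :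
    cdeg H K x y ≤ t := Nat.sInf_le h

lemma cond_of_cdeg_le {K H : Multigraph V} {x y : V} {t : ℕ}
    (hsub : IsSubgraph K H) (h : cdeg H K x y ≤ t) :
    ∀ Z : Finset V, (∀ z ∈ Z, 1 ≤ K.mu x z) → y ∈ Z →
      ∑ z ∈ Z, ((K.deg z : ℤ) - (H.deg z : ℤ) + (K.mu x z : ℤ) - (t : ℤ)) ≤ 1 := by
  have hne : { l : ℕ | ∀ Z : Finset V, (∀ z ∈ Z, 1 ≤ K.mu x z) → y ∈ Z →
      ∑ z ∈ Z, ((K.deg z : ℤ) - (H.deg z : ℤ) + (K.mu x z : ℤ) - (l : ℤ)) ≤ 1 }.Nonempty :=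
    ⟨K.deg x, degx_mem_cdeg_set hsub x y⟩
  have hmem := Nat.sInf_mem hne
  intro Z hZ hy
  have h1 := hmem Z hZ hy
  have h2 : ∀ z ∈ Z, (K.deg z : ℤ) - (H.deg z : ℤ) + (K.mu x z : ℤ) - (t : ℤ) ≤
      (K.deg z : ℤ) - (H.deg z : ℤ) + (K.mu x z : ℤ) - (cdeg H K x y : ℤ) := by
    intro z _
    have : (cdeg H K x y : ℤ) ≤ (t : ℤ) := by exact_mod_cast h
    omega
  exact le_trans (Finset.sum_le_sum h2) h1

lemma cdeg_le_degx {K H : Multigraph V} (hsub : IsSubgraph K H) (x y : V) :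
    cdeg H K x y ≤ K.deg x := Nat.sInf_le (degx_mem_cdeg_set hsub x y)

/-- The full-multiplicity closure of a subgraph. -/
def fullClosure (K H : Multigraph V) : Multigraph V where
  mu u v := if 1 ≤ K.mu u v then H.mu u v else 0
  symm u v := by simp only [K.symm u v, H.symm u v]
  loopless v := by simp [K.loopless, H.loopless]

lemma fullClosure_mu (K H : Multigraph V) (u v : V) :
    (fullClosure K H).mu u v = if 1 ≤ K.mu u v then H.mu u v else 0 := rfl

lemma mu_le_fullClosure {K H : Multigraph V} (hsub : IsSubgraph K H) (u v : V) :
    K.mu u v ≤ (fullClosure K H).mu u v := by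
  rw [fullClosure_mu]
  split <;> [exact hsub u v; omega]

lemma deg_le_fullClosure {K H : Multigraph V} (hsub : IsSubgraph K H) (v : V) :
    K.deg v ≤ (fullClosure K H).deg v :=
  Finset.sum_le_sum fun u _ => mu_le_fullClosure hsub v u

lemma fullClosure_isSubgraph (K H : Multigraph V) : IsSubgraph (fullClosure K H) H := by
  intro u v
  rw [fullClosure_mu]
  split <;> omega

lemma fullClosure_fullMult (K H : Multigraph V) : FullMult (fullClosure K H) H := by
  intro u v
  rw [fullClosure_mu]
  split <;> [right; left] <;> rfl

end Multigraph

open Multigraph in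
/-- Lemma: for H of constant multiplicity t+1, corefan(H) ≤ t iff every nonempty
full-multiplicity subgraph K has an edge xy with |(N_H(x) ∩ Z(K)) \ {y}| ≤ d_H(y) − d_K(y). -/
theorem stmt7 {V : Type*} [Fintype V] [DecidableEq V] (t : ℕ) (H : Multigraph V)
    (hconst : ∀ u v, H.mu u v = 0 ∨ H.mu u v = t + 1) :
    H.corefan ≤ t ↔
      ∀ K : Multigraph V, IsSubgraph K H → FullMult K H → HasEdge K →
        ∃ x y, 1 ≤ K.mu x y ∧
          (Finset.univ.filter fun z =>
              1 ≤ H.mu x z ∧ (1 ≤ K.deg z ∧ K.deg z = H.deg z) ∧ z ≠ y).card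
            ≤ H.deg y - K.deg y := by
  constructor
  · -- corefan ≤ t → condition on full-multiplicity subgraphs
    intro hcor K hsub hfull hedge
    have hM : { m | ∃ x y, 1 ≤ K.mu x y ∧ m = cdeg H K x y }.Nonempty := by
      obtain ⟨u, v, huv⟩ := hedge
      exact ⟨cdeg H K u v, u, v, huv, rfl⟩
    have hbdd : BddAbove { n | ∃ K : Multigraph V, IsSubgraph K H ∧ HasEdge K ∧
        n = sInf { m | ∃ x y, 1 ≤ K.mu x y ∧ m = cdeg H K x y } } := by
      refine ⟨H.maxDeg, ?_⟩
      rintro n ⟨K', hsub', hedge', rfl⟩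
      obtain ⟨u, v, huv⟩ := hedge'
      have h1 : sInf { m | ∃ x y, 1 ≤ K'.mu x y ∧ m = cdeg H K' x y } ≤ cdeg H K' u v :=
        Nat.sInf_le ⟨u, v, huv, rfl⟩
      have h2 := cdeg_le_degx hsub' u v
      have h3 := deg_le_deg hsub' u
      have h4 : H.deg u ≤ H.maxDeg := Finset.le_sup (Finset.mem_univ u)
      omega
    have hmem : sInf { m | ∃ x y, 1 ≤ K.mu x y ∧ m = cdeg H K x y } ∈
        { n | ∃ K : Multigraph V, IsSubgraph K H ∧ HasEdge K ∧
          n = sInf { m | ∃ x y, 1 ≤ K.mu x y ∧ m = cdeg H K x y } } :=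
      ⟨K, hsub, hedge, rfl⟩
    have hle : sInf { m | ∃ x y, 1 ≤ K.mu x y ∧ m = cdeg H K x y } ≤ t :=
      le_trans (le_csSup hbdd hmem) hcor
    obtain ⟨x, y, hxy, heq⟩ := Nat.sInf_mem hM
    have hc : cdeg H K x y ≤ t := by omega
    have hcond := cond_of_cdeg_le hsub hc
    refine ⟨x, y, hxy, ?_⟩
    set F := Finset.univ.filter fun z =>
        1 ≤ H.mu x z ∧ (1 ≤ K.deg z ∧ K.deg z = H.deg z) ∧ z ≠ y with hF
    have hyF : y ∉ F := by simp [hF]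
    have hmemF : ∀ z ∈ F, 1 ≤ H.mu x z ∧ K.deg z = H.deg z ∧ z ≠ y := by
      intro z hz
      rw [hF, Finset.mem_filter] at hz
      exact ⟨hz.2.1, hz.2.2.1.2, hz.2.2.2⟩
    have hmuF : ∀ z ∈ F, K.mu x z = t + 1 := by
      intro z hz
      obtain ⟨h1, h2, _⟩ := hmemF z hz
      have h3 : K.mu z x = H.mu z x := mu_eq_of_deg_eq hsub h2 x
      rw [K.symm x z, h3, ← H.symm x z]
      rcases hconst x z with h | h <;> omega
    have hZsub : ∀ z ∈ insert y F, 1 ≤ K.mu x z := by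
      intro z hz
      rcases Finset.mem_insert.1 hz with rfl | hz
      · exact hxy
      · rw [hmuF z hz]; omega
    have hsum := hcond (insert y F) hZsub (Finset.mem_insert_self y F)
    rw [Finset.sum_insert hyF] at hsum
    have hFsum : ∑ z ∈ F, ((K.deg z : ℤ) - (H.deg z : ℤ) + (K.mu x z : ℤ) - (t : ℤ))
        = (F.card : ℤ) := by
      rw [Finset.sum_congr rfl (fun z hz => ?_), Finset.sum_const, nsmul_eq_mul, mul_one]
      obtain ⟨_, h2, _⟩ := hmemF z hz
      rw [h2, hmuF z hz]
      push_cast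
      ring
    rw [hFsum] at hsum
    have hmuxy : K.mu x y = t + 1 := by
      rcases hfull x y with h | h
      · omega
      · rcases hconst x y with h' | h' <;> omega
    have hdy := deg_le_deg hsub y
    rw [hmuxy] at hsum
    push_cast at hsum
    omega
  · -- condition on full-multiplicity subgraphs → corefan ≤ t
    intro hyp
    refine csSup_le' ?_
    rintro n ⟨K, hsub, hedge, rfl⟩
    set K' := fullClosure K H with hK'
    have hsub' : IsSubgraph K' H := fullClosure_isSubgraph K H
    have hedge' : HasEdge K' := by
      obtain ⟨u, v, huv⟩ := hedge
      refine ⟨u, v, ?_⟩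
      rw [hK', fullClosure_mu, if_pos huv]
      exact le_trans huv (hsub u v)
    obtain ⟨x, y, hxy', hcard⟩ := hyp K' hsub' (fullClosure_fullMult K H) hedge'
    have hxy : 1 ≤ K.mu x y := by
      by_contra h
      rw [hK', fullClosure_mu, if_neg h] at hxy'
      omega
    refine le_trans (Nat.sInf_le ⟨x, y, hxy, rfl⟩) (cdeg_le_of_cond ?_)
    intro Z hZ hyZ
    set F' := Finset.univ.filter fun z =>
        1 ≤ H.mu x z ∧ (1 ≤ K'.deg z ∧ K'.deg z = H.deg z) ∧ z ≠ y with hF'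
    -- move from K to K'
    have hstep : ∑ z ∈ Z, ((K.deg z : ℤ) - (H.deg z : ℤ) + (K.mu x z : ℤ) - (t : ℤ))
        ≤ ∑ z ∈ Z, ((K'.deg z : ℤ) - (H.deg z : ℤ) + (K'.mu x z : ℤ) - (t : ℤ)) := by
      apply Finset.sum_le_sum
      intro z _
      have h1 := deg_le_fullClosure hsub z
      have h2 := mu_le_fullClosure hsub x z
      rw [← hK'] at h1 h2
      push_cast
      omega
    refine le_trans hstep ?_
    have hmuZ : ∀ z ∈ Z, K'.mu x z = t + 1 := by
      intro z hz
      rw [hK', fullClosure_mu, if_pos (hZ z hz)]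
      have h1 : 1 ≤ H.mu x z := le_trans (hZ z hz) (hsub x z)
      rcases hconst x z with h | h <;> omega
    rw [← Finset.sum_erase_add _ _ hyZ]
    have herase : ∑ z ∈ Z.erase y, ((K'.deg z : ℤ) - (H.deg z : ℤ) + (K'.mu x z : ℤ) - (t : ℤ))
        ≤ (F'.card : ℤ) := by
      have hind : ∀ z ∈ Z.erase y,
          (K'.deg z : ℤ) - (H.deg z : ℤ) + (K'.mu x z : ℤ) - (t : ℤ)
            ≤ (if z ∈ F' then (1 : ℤ) else 0) := by
        intro z hz
        obtain ⟨hzy, hzZ⟩ := Finset.mem_erase.1 hz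
        have hmu := hmuZ z hzZ
        have hdz := deg_le_deg hsub' z
        by_cases hmem : z ∈ F'
        · rw [if_pos hmem]
          push_cast
          omega
        · rw [if_neg hmem]
          have h1 : 1 ≤ H.mu x z := le_trans (hZ z hzZ) (hsub x z)
          have h2 : 1 ≤ K'.deg z := by
            have := mu_le_deg K' z x
            rw [K'.symm x z] at hmu
            omega
          have h3 : K'.deg z ≠ H.deg z := by
            intro h
            exact hmem (by
              rw [hF', Finset.mem_filter]
              exact ⟨Finset.mem_univ z, h1, ⟨h2, h⟩, hzy⟩)
          push_cast
          omega
      refine le_trans (Finset.sum_le_sum hind) ?_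
      rw [← Finset.sum_filter]
      rw [Finset.sum_const, nsmul_eq_mul, mul_one]
      have : (Z.erase y).filter (· ∈ F') ⊆ F' := by
        intro z hz
        exact (Finset.mem_filter.1 hz).2
      exact_mod_cast Finset.card_le_card this
    have hy1 : K'.mu x y = t + 1 := hmuZ y hyZ
    have hdy' := deg_le_deg hsub' y
    have hcard' : (F'.card : ℤ) ≤ (H.deg y : ℤ) - (K'.deg y : ℤ) := by omega
    have : (K'.deg y : ℤ) - (H.deg y : ℤ) + (K'.mu x y : ℤ) - (t : ℤ) ≤
        1 - (F'.card : ℤ) := by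
      rw [hy1]
      push_cast
      omega
    omega
end
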